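/- Let (W,S) be a finitary Coxeter system and T its set of reflections. A self-map τ : W → W is T-Lipschitz if and only if there exist w ∈ W and a subset J ⊆ S which is a union of vertex sets of connected components of the Coxeter graph such that τ(x) = p_J(x)·w for all x ∈ W, where p_J : W → W_J is the projection determined by the direct product decomposition W = W_J × W_{S∖J} (W_J and W_{S∖J} being the standard parabolic subgroups generated by J and S∖J, which commute elementwise and satisfy W_J ∩ W_{S∖J} = {1} because no edges of the Coxeter graph join J to S∖J). -/

import Mathlib

/-- The Coxeter graph of a Coxeter matrix `M`: vertices are the indices of the simple
reflections, with an edge between distinct `i, j` exactly when the order `M i j` of `sᵢ sⱼ` is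
at least 3 (where, following Mathlib's convention, `M i j = 0` encodes infinite order). -/
def coxeterGraph {B : Type*} (M : CoxeterMatrix B) : SimpleGraph B where
  Adj i j := i ≠ j ∧ (M i j = 0 ∨ 3 ≤ M i j)
  symm := by
    constructor
    intro i j h
    exact ⟨Ne.symm h.1, by rw [M.symmetric j i]; exact h.2⟩
  loopless := ⟨by intro i h; exact h.1 rfl⟩

/-- `τ : W → W` is `T`-Lipschitz for the set `T` of reflections of a Coxeter system:
`τ(tθ) ∈ {τ(θ), t·τ(θ)}` for every `θ ∈ W` and every reflection `t`. -/
def IsReflLipschitz {B W : Type*} [Group W] {M : CoxeterMatrix B}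
    (cs : CoxeterSystem M W) (τ : W → W) : Prop :=
  ∀ θ t : W, cs.IsReflection t → (τ (t * θ) = τ θ ∨ τ (t * θ) = t * τ θ)

namespace CoxAux
open Real

lemma trig2 (θ x : ℝ) : Real.sin (x + θ) = 2 * Real.cos θ * Real.sin x - Real.sin (x - θ) := by
  simp only [Real.sin_add, Real.sin_sub]; ring

lemma trig1 (θ x : ℝ) : Real.sin (x + θ + θ) =
    (4 * Real.cos θ ^ 2 - 1) * Real.sin x - 2 * Real.cos θ * Real.sin (x - θ) := by
  simp only [Real.sin_add, Real.sin_sub, Real.cos_add]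
  linear_combination (-Real.sin x) * (Real.sin_sq_add_cos_sq θ)

variable {B : Type*} (M : CoxeterMatrix B)

noncomputable def kappa (k l : B) : ℝ := - Real.cos (π / M k l)

lemma kappa_symm (k l : B) : kappa M k l = kappa M l k := by rw [kappa, kappa, M.symmetric]

lemma kappa_self (k : B) : kappa M k k = 1 := by
  rw [kappa, M.diagonal]; simp

noncomputable def bform (k : B) : (B →₀ ℝ) →ₗ[ℝ] ℝ :=
  Finsupp.linearCombination ℝ (fun l => kappa M k l)

lemma bform_single (k l : B) : bform M k (Finsupp.single l 1) = kappa M k l := by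
  simp [bform]

noncomputable def rfl' (k : B) : Module.End ℝ (B →₀ ℝ) :=
  LinearMap.id - (2:ℝ) • (bform M k).smulRight (Finsupp.single k 1)

lemma rfl'_apply (k : B) (v : B →₀ ℝ) :
    rfl' M k v = v - (2 * bform M k v) • Finsupp.single k 1 := by
  simp [rfl', smul_smul]

lemma M_ge_two {k l : B} (hfin : ∀ i j : B, M i j ≠ 0) (h : k ≠ l) : 2 ≤ M k l := by
  have h0 := hfin k l
  have h1 := M.off_diagonal k l h
  omega

theorem isLiftable (hfin : ∀ i j : B, M i j ≠ 0) : M.IsLiftable (rfl' M) := by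
  intro k l
  by_cases hkl : k = l
  · subst hkl
    rw [M.diagonal, pow_one]
    apply LinearMap.ext; intro v
    have hb : bform M k (rfl' M k v) = - bform M k v := by
      rw [rfl'_apply, map_sub, map_smul, bform_single, kappa_self, smul_eq_mul]; ring
    rw [Module.End.mul_apply, rfl'_apply M k (rfl' M k v), hb, rfl'_apply, Module.End.one_apply]
    module
  · -- main case
    obtain ⟨m, hm⟩ : ∃ n, M k l = n := ⟨_, rfl⟩
    rw [hm]
    have hm2 : 2 ≤ m := hm ▸ M_ge_two M hfin hkl
    have hmR : (2:ℝ) ≤ (m:ℝ) := by exact_mod_cast hm2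
    have hm0 : (m:ℝ) ≠ 0 := by linarith
    obtain ⟨θ, hθ⟩ : ∃ θ:ℝ, θ = π / (m:ℝ) := ⟨_, rfl⟩
    obtain ⟨c, hc⟩ : ∃ c:ℝ, c = Real.cos θ := ⟨_, rfl⟩
    obtain ⟨sθ, hsθ⟩ : ∃ s:ℝ, s = Real.sin θ := ⟨_, rfl⟩
    have hθpos : 0 < θ := by rw [hθ]; apply div_pos Real.pi_pos; linarith
    have hθlt : θ < π := by
      rw [hθ]
      apply div_lt_self Real.pi_pos
      linarith
    have hs : 0 < sθ := hsθ ▸ Real.sin_pos_of_pos_of_lt_pi hθpos hθlt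
    have a1 : Real.sin ((2*(m:ℝ)+1)*θ) = sθ := by
      rw [show (2*(m:ℝ)+1)*θ = θ + 2*π by rw [hθ]; field_simp; ring, Real.sin_add_two_pi, hsθ]
    have a2 : Real.sin ((2*(m:ℝ))*θ) = 0 := by
      rw [show (2*(m:ℝ))*θ = 2*π by rw [hθ]; field_simp, Real.sin_two_pi]
    have a3 : Real.sin (θ - (2*(m:ℝ))*θ) = sθ := by
      rw [show θ - (2*(m:ℝ))*θ = θ - 2*π by rw [hθ]; field_simp, Real.sin_sub_two_pi, hsθ]
    obtain ⟨ek, hek⟩ : ∃ v : B →₀ ℝ, v = Finsupp.single k 1 := ⟨_, rfl⟩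
    obtain ⟨el, hel⟩ : ∃ v : B →₀ ℝ, v = Finsupp.single l 1 := ⟨_, rfl⟩
    have hbkk : bform M k ek = 1 := by rw [hek, bform_single, kappa_self]
    have hbll : bform M l el = 1 := by rw [hel, bform_single, kappa_self]
    have hbkl : bform M k el = -c := by rw [hel, bform_single, kappa, hc, hθ, hm]
    have hblk : bform M l ek = -c := by rw [hek, bform_single, kappa_symm, kappa, hc, hθ, hm]
    obtain ⟨T, hT⟩ : ∃ T, T = rfl' M k * rfl' M l := ⟨_, rfl⟩
    rw [← hT]
    have hrk : ∀ v : B →₀ ℝ, rfl' M k v = v - (2 * bform M k v) • ek := by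
      intro v; rw [rfl'_apply, hek]
    have hrl : ∀ v : B →₀ ℝ, rfl' M l v = v - (2 * bform M l v) • el := by
      intro v; rw [rfl'_apply, hel]
    have h1 : rfl' M l ek = ek + (2*c) • el := by rw [hrl, hblk]; module
    have hbk1 : bform M k (ek + (2*c) • el) = 1 - 2*c^2 := by
      rw [map_add, map_smul, hbkk, hbkl, smul_eq_mul]; ring
    have hTek : T ek = (4*c^2-1) • ek + (2*c) • el := by
      rw [hT, Module.End.mul_apply, h1, hrk, hbk1]; module
    have h2 : rfl' M l el = -el := by rw [hrl, hbll]; module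
    have hbk2 : bform M k (-el) = c := by rw [map_neg, hbkl]; ring
    have hTel : T el = (-(2*c)) • ek + (-1:ℝ) • el := by
      rw [hT, Module.End.mul_apply, h2, hrk, hbk2]; module
    have hTw : ∀ w, bform M k w = 0 → bform M l w = 0 → T w = w := by
      intro w h1' h2'
      rw [hT, Module.End.mul_apply, hrl w, h2', mul_zero, zero_smul, sub_zero,
        hrk w, h1', mul_zero, zero_smul, sub_zero]
    have powfix : ∀ w, bform M k w = 0 → bform M l w = 0 → ∀ t : ℕ, (T ^ t) w = w := by
      intro w h1' h2' t
      induction t with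
      | zero => simp
      | succ n ihn => rw [pow_succ, Module.End.mul_apply, hTw w h1' h2', ihn]
    have key : ∀ t : ℕ,
        (T ^ t) ek = (Real.sin ((2*(t:ℝ)+1)*θ)/sθ) • ek + (Real.sin ((2*(t:ℝ))*θ)/sθ) • el ∧
        (T ^ t) el = (-Real.sin ((2*(t:ℝ))*θ)/sθ) • ek + (Real.sin (θ - (2*(t:ℝ))*θ)/sθ) • el := by
      intro t
      induction t with
      | zero =>
        norm_num
        constructor
        · rw [← hsθ, div_self hs.ne', one_smul]
        · rw [← hsθ, div_self hs.ne', one_smul]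
      | succ t ih =>
        obtain ⟨ih1, ih2⟩ := ih
        have hstep : ∀ v : B →₀ ℝ, (T ^ (t+1)) v = (T ^ t) (T v) := by
          intro v; rw [pow_succ, Module.End.mul_apply]
        have e1 : Real.sin ((2*((t:ℝ)+1)+1)*θ) =
            (4*c^2-1) * Real.sin ((2*(t:ℝ)+1)*θ) - 2*c*Real.sin ((2*(t:ℝ))*θ) := by
          rw [show (2*((t:ℝ)+1)+1)*θ = (2*(t:ℝ)+1)*θ + θ + θ by ring, hc]
          have := trig1 θ ((2*(t:ℝ)+1)*θ)
          rw [show (2*(t:ℝ)+1)*θ - θ = (2*(t:ℝ))*θ by ring] at this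
          exact this
        have e2 : Real.sin ((2*((t:ℝ)+1))*θ) =
            2*c*Real.sin ((2*(t:ℝ)+1)*θ) - Real.sin ((2*(t:ℝ))*θ) := by
          rw [show (2*((t:ℝ)+1))*θ = (2*(t:ℝ)+1)*θ + θ by ring, hc]
          have := trig2 θ ((2*(t:ℝ)+1)*θ)
          rw [show (2*(t:ℝ)+1)*θ - θ = (2*(t:ℝ))*θ by ring] at this
          exact this
        have e3 : Real.sin (θ - (2*(t:ℝ))*θ) = - Real.sin ((2*(t:ℝ))*θ - θ) := by
          rw [show θ - (2*(t:ℝ))*θ = -((2*(t:ℝ))*θ - θ) by ring, Real.sin_neg]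
        have e4 : Real.sin ((2*((t:ℝ)+1))*θ) =
            (4*c^2-1) * Real.sin ((2*(t:ℝ))*θ) - 2*c*Real.sin ((2*(t:ℝ))*θ - θ) := by
          rw [show (2*((t:ℝ)+1))*θ = (2*(t:ℝ))*θ + θ + θ by ring, hc]
          exact trig1 θ ((2*(t:ℝ))*θ)
        have e5 : Real.sin ((2*(t:ℝ)+1)*θ) =
            2*c*Real.sin ((2*(t:ℝ))*θ) - Real.sin ((2*(t:ℝ))*θ - θ) := by
          rw [show (2*(t:ℝ)+1)*θ = (2*(t:ℝ))*θ + θ by ring, hc]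
          exact trig2 θ ((2*(t:ℝ))*θ)
        have e6 : Real.sin (θ - (2*((t:ℝ)+1))*θ) = - Real.sin ((2*((t:ℝ)+1))*θ - θ) := by
          rw [show θ - (2*((t:ℝ)+1))*θ = -((2*((t:ℝ)+1))*θ - θ) by ring, Real.sin_neg]
        have e7 : (2*((t:ℝ)+1))*θ - θ = (2*(t:ℝ)+1)*θ := by ring
        constructor
        · rw [hstep, hTek, map_add, map_smul, map_smul, ih1, ih2]
          push_cast
          rw [e1, e2, e3]
          match_scalars
          · field_simp; ring
          · field_simp
            linear_combination (norm := ring_nf) (-2*c) * e5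
        · rw [hstep, hTel, map_add, map_smul, map_smul, ih1, ih2]
          push_cast
          rw [e6, e7, e5, e4, e3]
          match_scalars
          · field_simp; ring
          · field_simp; ring
    have hTmek : (T ^ m) ek = ek := by
      rw [(key m).1, a1, a2, div_self hs.ne', zero_div]; module
    have hTmel : (T ^ m) el = el := by
      rw [(key m).2, a2, a3, div_self hs.ne', neg_zero, zero_div]; module
    have hc2 : 1 - c^2 ≠ 0 := by
      have h := Real.sin_sq_add_cos_sq θ
      rw [← hc, ← hsθ] at h
      nlinarith [hs]
    apply LinearMap.ext; intro v
    obtain ⟨a, ha⟩ : ∃ x:ℝ, x = bform M k v := ⟨_, rfl⟩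
    obtain ⟨d, hd⟩ : ∃ x:ℝ, x = bform M l v := ⟨_, rfl⟩
    obtain ⟨α, hα⟩ : ∃ x:ℝ, x = (a + c*d)/(1-c^2) := ⟨_, rfl⟩
    obtain ⟨β, hβ⟩ : ∃ x:ℝ, x = (d + c*a)/(1-c^2) := ⟨_, rfl⟩
    have h1' : α - c*β = a := by rw [hα, hβ]; field_simp; ring
    have h2' : β - c*α = d := by rw [hα, hβ]; field_simp; ring
    obtain ⟨w, hw⟩ : ∃ w : B →₀ ℝ, w = v - α • ek - β • el := ⟨_, rfl⟩
    have hbkw : bform M k w = 0 := by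
      rw [hw, map_sub, map_sub, map_smul, map_smul, hbkk, hbkl, ← ha, smul_eq_mul, smul_eq_mul]
      linear_combination -h1'
    have hblw : bform M l w = 0 := by
      rw [hw, map_sub, map_sub, map_smul, map_smul, hblk, hbll, ← hd, smul_eq_mul, smul_eq_mul]
      linear_combination -h2'
    have hTmw : (T ^ m) w = w := powfix w hbkw hblw m
    have hdecomp : v = α • ek + β • el + w := by rw [hw]; abel
    rw [Module.End.one_apply, hdecomp, map_add, map_add, map_smul, map_smul, hTmek, hTmel, hTmw]

section CS
variable {B W : Type*} [Group W] {M : CoxeterMatrix B} (cs : CoxeterSystem M W)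

noncomputable def rho (hfin : ∀ i j : B, M i j ≠ 0) : W →* Module.End ℝ (B →₀ ℝ) :=
  cs.lift ⟨rfl' M, isLiftable M hfin⟩

lemma rho_simple (hfin : ∀ i j : B, M i j ≠ 0) (i : B) :
    rho cs hfin (cs.simple i) = rfl' M i :=
  cs.lift_apply_simple (isLiftable M hfin) i

lemma simple_ne_simple (hfin : ∀ i j : B, M i j ≠ 0) {i j : B} (hij : i ≠ j) :
    cs.simple i ≠ cs.simple j := by
  intro h
  have h0 := congrArg (rho cs hfin) h
  rw [rho_simple, rho_simple] at h0
  have h1 := LinearMap.congr_fun h0 (Finsupp.single i 1)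
  rw [rfl'_apply, rfl'_apply, bform_single, kappa_self, bform_single] at h1
  have h2 := congrArg (fun f : B →₀ ℝ => f i) h1
  simp only [Finsupp.sub_apply, Finsupp.smul_apply, Finsupp.single_eq_same,
    Finsupp.single_eq_of_ne' hij.symm, smul_eq_mul] at h2
  norm_num at h2

lemma M_eq_two_of_commute (hfin : ∀ i j : B, M i j ≠ 0) {i j : B} (hij : i ≠ j)
    (hcomm : cs.simple i * cs.simple j = cs.simple j * cs.simple i) : M i j = 2 := by
  obtain ⟨c, hc⟩ : ∃ c : ℝ, c = kappa M i j := ⟨_, rfl⟩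
  have h0 := congrArg (rho cs hfin) hcomm
  rw [map_mul, map_mul, rho_simple, rho_simple] at h0
  have h1 := LinearMap.congr_fun h0 (Finsupp.single i 1)
  have e1 : rfl' M j (Finsupp.single i 1) =
      Finsupp.single i 1 - (2*c) • Finsupp.single j 1 := by
    rw [rfl'_apply, bform_single, kappa_symm, ← hc]
  have e2 : bform M i (Finsupp.single i 1 - (2*c) • Finsupp.single j 1) = 1 - 2*c^2 := by
    rw [map_sub, map_smul, bform_single, bform_single, kappa_self, ← hc, smul_eq_mul]; ring
  have e3 : rfl' M i (Finsupp.single i 1) =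
      Finsupp.single i 1 - (2:ℝ) • Finsupp.single i 1 := by
    rw [rfl'_apply, bform_single, kappa_self, mul_one]
  have e4 : bform M i (Finsupp.single i 1) = 1 := by rw [bform_single, kappa_self]
  have e5 : bform M j (Finsupp.single i 1 - (2:ℝ) • Finsupp.single i 1) = -c := by
    rw [map_sub, map_smul, bform_single, kappa_symm, ← hc, smul_eq_mul]; ring
  rw [Module.End.mul_apply, Module.End.mul_apply, e1, e3, rfl'_apply, rfl'_apply, e2, e5] at h1
  have h2 := congrArg (fun f : B →₀ ℝ => f j) h1
  simp only [Finsupp.sub_apply, Finsupp.smul_apply, Finsupp.single_eq_same,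
    Finsupp.single_eq_of_ne hij, Finsupp.single_eq_of_ne hij.symm, smul_eq_mul] at h2
  have hc0 : c = 0 := by norm_num at h2; linarith
  by_contra hne
  have h3 : 3 ≤ M i j := by have := M_ge_two M hfin hij; omega
  have h3R : (3:ℝ) ≤ (M i j : ℝ) := by exact_mod_cast h3
  have hcos : Real.cos (π / M i j) = 0 := by
    have : kappa M i j = 0 := by rw [← hc]; exact hc0
    rw [kappa] at this
    linarith
  have hpos : 0 < Real.cos (π / M i j) := by
    apply Real.cos_pos_of_mem_Ioo
    constructor
    · have : 0 < π / (M i j : ℝ) := div_pos Real.pi_pos (by linarith)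
      linarith [Real.pi_pos]
    · calc π / (M i j : ℝ) ≤ π / 3 := by
              apply div_le_div_of_nonneg_left Real.pi_pos.le (by norm_num) h3R
          _ < π / 2 := by
              apply div_lt_div_of_pos_left Real.pi_pos (by norm_num) (by norm_num)
  linarith

lemma M_eq_two_commute {i j : B} (h2 : M i j = 2) :
    cs.simple i * cs.simple j = cs.simple j * cs.simple i := by
  have := cs.simple_mul_simple_pow i j
  rw [h2, pow_two] at this
  have h3 : cs.simple i * cs.simple j = (cs.simple i * cs.simple j)⁻¹ := by
    rw [eq_inv_iff_mul_eq_one]; exact this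
  rw [h3, mul_inv_rev, cs.inv_simple, cs.inv_simple]

lemma simple_ne_one (i : B) : cs.simple i ≠ 1 := by
  intro h
  have := cs.length_simple i
  rw [h, cs.length_one] at this
  norm_num at this

end CS

section Lip
variable {B W : Type*} [Group W] {M : CoxeterMatrix B} (cs : CoxeterSystem M W) (τ : W → W)

lemma isRefl_sjsisj (i j : B) :
    cs.IsReflection (cs.simple j * cs.simple i * cs.simple j) := by
  have h := (cs.isReflection_simple i).conj (cs.simple j)
  rwa [cs.inv_simple] at h

lemma act_step (hτ : IsReflLipschitz cs τ) (hfin : ∀ i j : B, M i j ≠ 0) (i j : B) (θ : W) :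
    (τ (cs.simple i * θ) = cs.simple i * τ θ) ↔
    (τ (cs.simple i * (cs.simple j * θ)) = cs.simple i * τ (cs.simple j * θ)) := by
  have hne1 : cs.simple i ≠ 1 := simple_ne_one cs i
  by_cases hij : i = j
  · subst hij
    rw [cs.simple_mul_simple_cancel_left]
    constructor
    · intro h
      rw [h, cs.simple_mul_simple_cancel_left]
    · intro h
      rw [h, cs.simple_mul_simple_cancel_left]
  · have hab : cs.simple i ≠ cs.simple j := simple_ne_simple cs hfin hij
    have hab1 : cs.simple i * cs.simple j ≠ 1 := by
      intro h
      apply hab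
      rw [← cs.inv_simple j]
      exact eq_inv_of_mul_eq_one_left h
    have hba1 : cs.simple j * cs.simple i ≠ 1 := by
      intro h
      apply hab
      rw [← cs.inv_simple j]
      exact (inv_eq_of_mul_eq_one_right h).symm
    have harg : ∀ x : W, (cs.simple i * cs.simple j * cs.simple i) * (cs.simple i * x)
        = cs.simple i * (cs.simple j * x) := by
      intro x
      rw [show (cs.simple i * cs.simple j * cs.simple i) * (cs.simple i * x)
        = cs.simple i * cs.simple j * (cs.simple i * cs.simple i) * x by group,
        cs.simple_mul_simple_self, mul_one, mul_assoc]
    have hC2 := hτ (cs.simple i * θ) (cs.simple i * cs.simple j * cs.simple i)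
      (isRefl_sjsisj cs j i)
    rw [harg θ] at hC2
    have hC1 := hτ (cs.simple j * θ) (cs.simple i) (cs.isReflection_simple i)
    have hC0 := hτ θ (cs.simple j) (cs.isReflection_simple j)
    constructor
    · intro h
      rw [h, harg (τ θ)] at hC2
      rcases hC0 with h0 | h0
      · -- τ (s j θ) = τ θ
        rw [h0]
        rcases hC1 with h1 | h1
        · -- τ(s i (s j θ)) = τ(s j θ) = τ θ; combine with hC2
          rw [h1, h0] at hC2 ⊢
          exfalso
          rcases hC2 with h2 | h2
          · exact hne1 (right_eq_mul.mp h2)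
          · rw [← mul_assoc] at h2
            exact hab1 (right_eq_mul.mp h2)
        · rw [h1, h0]
      · -- τ (s j θ) = s j * τ θ
        rw [h0]
        rcases hC1 with h1 | h1
        · rw [h1, h0] at hC2 ⊢
          exfalso
          rcases hC2 with h2 | h2
          · exact hab (mul_right_cancel h2).symm
          · exact hne1 (right_eq_mul.mp h2)
        · rw [h1, h0]
    · intro h
      rcases hτ θ (cs.simple i) (cs.isReflection_simple i) with hA | hA
      swap
      · exact hA
      exfalso
      rw [hA] at hC2
      rcases hC0 with h0 | h0
      · rw [h0] at h
        rw [h] at hC2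
        rcases hC2 with h2 | h2
        · exact hne1 (mul_eq_right.mp h2)
        · rw [show cs.simple i * cs.simple j * cs.simple i * τ θ
            = cs.simple i * (cs.simple j * cs.simple i * τ θ) by group] at h2
          have h3 := mul_left_cancel h2
          exact hba1 (right_eq_mul.mp h3)
      · rw [h0] at h
        rw [h] at hC2
        rcases hC2 with h2 | h2
        · rw [← mul_assoc] at h2
          exact hab1 ((right_eq_mul.mp h2.symm))
        · rw [show cs.simple i * cs.simple j * cs.simple i * τ θ
            = cs.simple i * (cs.simple j * (cs.simple i * τ θ)) by group] at h2
          have h3 := mul_left_cancel (mul_left_cancel h2)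
          exact hne1 (right_eq_mul.mp h3)

lemma act_const (hτ : IsReflLipschitz cs τ) (hfin : ∀ i j : B, M i j ≠ 0) (θ : W) (i : B) :
    (τ (cs.simple i * θ) = cs.simple i * τ θ) ↔ (τ (cs.simple i) = cs.simple i * τ 1) := by
  obtain ⟨l, rfl⟩ := cs.wordProd_surjective θ
  induction l with
  | nil =>
    rw [cs.wordProd_nil, mul_one]
  | cons j l ih =>
    rw [cs.wordProd_cons]
    exact (act_step cs τ hτ hfin i j (cs.wordProd l)).symm.trans ih

lemma inact_all (hτ : IsReflLipschitz cs τ) (hfin : ∀ i j : B, M i j ≠ 0) {j : B}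
    (hAj : ¬ τ (cs.simple j) = cs.simple j * τ 1) (θ : W) :
    τ (cs.simple j * θ) = τ θ := by
  rcases hτ θ (cs.simple j) (cs.isReflection_simple j) with h | h
  · exact h
  · exact absurd ((act_const cs τ hτ hfin θ j).mp h) hAj

lemma mixed_M_eq_two (hτ : IsReflLipschitz cs τ) (hfin : ∀ i j : B, M i j ≠ 0) {i j : B}
    (hij : i ≠ j) (hAi : τ (cs.simple i) = cs.simple i * τ 1)
    (hAj : ¬ τ (cs.simple j) = cs.simple j * τ 1) : M i j = 2 := by
  have acti : ∀ θ : W, τ (cs.simple i * θ) = cs.simple i * τ θ :=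
    fun θ => (act_const cs τ hτ hfin θ i).mpr hAi
  have actj : ∀ θ : W, τ (cs.simple j * θ) = τ θ := inact_all cs τ hτ hfin hAj
  have hval : τ (cs.simple j * (cs.simple i * cs.simple j)) = cs.simple i * τ 1 := by
    rw [actj, acti]
    have := actj 1
    rw [mul_one] at this
    rw [this]
  have harg2 : cs.simple j * cs.simple i * cs.simple j * 1
      = cs.simple j * (cs.simple i * cs.simple j) := by rw [mul_one, mul_assoc]
  rcases hτ 1 (cs.simple j * cs.simple i * cs.simple j) (isRefl_sjsisj cs i j) with h | h
  · rw [harg2, hval] at h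
    exact absurd (mul_eq_right.mp h) (simple_ne_one cs i)
  · rw [harg2, hval] at h
    have hcomm : cs.simple i = cs.simple j * cs.simple i * cs.simple j :=
      mul_right_cancel h
    have hcomm2 : cs.simple i * cs.simple j = cs.simple j * cs.simple i := by
      conv_lhs => rw [hcomm]
      rw [show cs.simple j * cs.simple i * cs.simple j * cs.simple j
        = cs.simple j * cs.simple i * (cs.simple j * cs.simple j) by group,
        cs.simple_mul_simple_self, mul_one]
    exact M_eq_two_of_commute cs hfin hij hcomm2

end Lip

end CoxAux

/-- **Theorem.** Let `(W,S)` be a finitary Coxeter system with reflection set `T`. A self-map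
`τ : W → W` is `T`-Lipschitz if and only if there are a subset `J ⊆ S` which is a union of
connected components of the Coxeter graph (equivalently: no edge of the Coxeter graph joins `J`
to its complement) and an element `w ∈ W` such that `τ(x) = p_J(x)·w` for all `x`, where
`p_J : W → W_J ≤ W` is the projection coming from the direct product decomposition
`W = W_J × W_{S∖J}`; it is the unique group homomorphism `W → W` fixing the simple reflections
indexed by `J` and killing those indexed by `S∖J`. -/
theorem reflLipschitz_iff_projection_translation
    {B W : Type*} [Group W] (M : CoxeterMatrix B) (cs : CoxeterSystem M W)
    (hfin : ∀ i j : B, M i j ≠ 0)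
    (τ : W → W) :
    IsReflLipschitz cs τ ↔
      ∃ (J : Set B), (∀ i ∈ J, ∀ j ∉ J, ¬ (coxeterGraph M).Adj i j) ∧
        ∃ (p : W →* W), (∀ i ∈ J, p (cs.simple i) = cs.simple i) ∧
          (∀ i ∉ J, p (cs.simple i) = 1) ∧
          ∃ w : W, ∀ x : W, τ x = p x * w := by
  classical
  constructor
  · intro hτ
    refine ⟨{i : B | τ (cs.simple i) = cs.simple i * τ 1}, ?_, ?_⟩
    · intro i hi j hj hadj
      simp only [Set.mem_setOf_eq] at hi hj
      have hadj' : i ≠ j ∧ (M i j = 0 ∨ 3 ≤ M i j) := hadj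
      obtain ⟨hne, hor⟩ := hadj'
      have h2 := CoxAux.mixed_M_eq_two cs τ hτ hfin hne hi hj
      rcases hor with h | h <;> omega
    · have hf : M.IsLiftable
          (fun i => if τ (cs.simple i) = cs.simple i * τ 1 then cs.simple i else 1) := by
        intro k l
        by_cases hk : τ (cs.simple k) = cs.simple k * τ 1 <;>
          by_cases hl : τ (cs.simple l) = cs.simple l * τ 1
        · simp only [if_pos hk, if_pos hl]
          exact cs.simple_mul_simple_pow k l
        · simp only [if_pos hk, if_neg hl, mul_one]
          have hne : k ≠ l := fun h => hl (h ▸ hk)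
          rw [CoxAux.mixed_M_eq_two cs τ hτ hfin hne hk hl]
          exact cs.simple_sq k
        · simp only [if_neg hk, if_pos hl, one_mul]
          have hne : l ≠ k := fun h => hk (h ▸ hl)
          rw [M.symmetric, CoxAux.mixed_M_eq_two cs τ hτ hfin hne hl hk]
          exact cs.simple_sq l
        · simp only [if_neg hk, if_neg hl, one_mul, one_pow]
      refine ⟨cs.lift ⟨_, hf⟩, ?_, ?_, τ 1, ?_⟩
      · intro i hi
        simp only [Set.mem_setOf_eq] at hi
        rw [cs.lift_apply_simple hf, if_pos hi]
      · intro i hi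
        simp only [Set.mem_setOf_eq] at hi
        rw [cs.lift_apply_simple hf, if_neg hi]
      · intro x
        obtain ⟨l, rfl⟩ := cs.wordProd_surjective x
        induction l with
        | nil => rw [cs.wordProd_nil, map_one, one_mul]
        | cons i l ih =>
          rw [cs.wordProd_cons, map_mul, cs.lift_apply_simple hf]
          by_cases hi : τ (cs.simple i) = cs.simple i * τ 1
          · rw [(CoxAux.act_const cs τ hτ hfin (cs.wordProd l) i).mpr hi, ih, if_pos hi,
              mul_assoc]
          · rw [CoxAux.inact_all cs τ hτ hfin hi (cs.wordProd l), ih, if_neg hi, one_mul]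
  · rintro ⟨J, hJ, p, hpJ, hpJc, w, hw⟩
    have hM2 : ∀ k ∈ J, ∀ j, j ∉ J → M k j = 2 := by
      intro k hk j hj
      have hne : k ≠ j := fun h => hj (h ▸ hk)
      have hnadj := hJ k hk j hj
      have h1 := M.off_diagonal k j hne
      have h0 := hfin k j
      by_contra hne2
      exact hnadj ⟨hne, by omega⟩
    have hcomm : ∀ k ∈ J, ∀ j, j ∉ J → Commute (cs.simple j) (cs.simple k) := by
      intro k hk j hj
      have h : cs.simple k * cs.simple j = cs.simple j * cs.simple k :=
        CoxAux.M_eq_two_commute cs (hM2 k hk j hj)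
      exact (show Commute (cs.simple k) (cs.simple j) from h).symm
    have hpcomm : ∀ j, j ∉ J → ∀ x : W, Commute (cs.simple j) (p x) := by
      intro j hj x
      obtain ⟨l, rfl⟩ := cs.wordProd_surjective x
      induction l with
      | nil =>
        rw [cs.wordProd_nil, map_one]
        exact Commute.one_right _
      | cons k l ih =>
        rw [cs.wordProd_cons, map_mul]
        refine Commute.mul_right ?_ ih
        by_cases hk : k ∈ J
        · rw [hpJ k hk]
          exact hcomm k hk j hj
        · rw [hpJc k hk]
          exact Commute.one_right _
    have key : ∀ i ∈ J, ∀ x : W, p x * cs.simple i * (p x)⁻¹ = x * cs.simple i * x⁻¹ := by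
      intro i hi x
      obtain ⟨l, rfl⟩ := cs.wordProd_surjective x
      induction l with
      | nil => simp
      | cons j l ih =>
        rw [cs.wordProd_cons, map_mul]
        by_cases hj : j ∈ J
        · rw [hpJ j hj]
          rw [show cs.simple j * p (cs.wordProd l) * cs.simple i *
                (cs.simple j * p (cs.wordProd l))⁻¹
              = cs.simple j * (p (cs.wordProd l) * cs.simple i * (p (cs.wordProd l))⁻¹) *
                (cs.simple j)⁻¹ by group]
          rw [ih]
          group
        · rw [hpJc j hj, one_mul]
          have hX2 : Commute (cs.simple j)
              (p (cs.wordProd l) * cs.simple i * (p (cs.wordProd l))⁻¹) :=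
            Commute.mul_right
              (Commute.mul_right (hpcomm j hj (cs.wordProd l)) (hcomm i hi j hj))
              (Commute.inv_right (hpcomm j hj (cs.wordProd l)))
          symm
          calc (cs.simple j * cs.wordProd l) * cs.simple i * (cs.simple j * cs.wordProd l)⁻¹
              = cs.simple j * (cs.wordProd l * cs.simple i * (cs.wordProd l)⁻¹) *
                (cs.simple j)⁻¹ := by group
            _ = cs.simple j * (p (cs.wordProd l) * cs.simple i * (p (cs.wordProd l))⁻¹) *
                (cs.simple j)⁻¹ := by rw [ih]
            _ = (p (cs.wordProd l) * cs.simple i * (p (cs.wordProd l))⁻¹) * cs.simple j *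
                (cs.simple j)⁻¹ := by rw [hX2.eq]
            _ = p (cs.wordProd l) * cs.simple i * (p (cs.wordProd l))⁻¹ := by group
    intro θ t ht
    obtain ⟨v, i, rfl⟩ := ht
    by_cases hi : i ∈ J
    · right
      rw [hw, hw, map_mul, map_mul, map_mul, map_inv, hpJ i hi, key i hi v, mul_assoc]
    · left
      rw [hw, hw, map_mul, map_mul, map_mul, map_inv, hpJc i hi, mul_one, mul_inv_cancel,
        one_mul]
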